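/- arXiv:2003.12239 — 3 statements merged into one kernel-verified Lean document; each statement's English description precedes it below -/
import Mathlib

section
/- Suppose T̂^π is an empirical Bellman operator for a policy π (i.e. E_{ω∼η}[T̂^π(f,ω)] = T^π f for all f ∈ ℝ^d), and suppose the constant step-size updates f_{n+1} = (1−α)f_n + α T̂^π(f_n, ω_n), with ω_n sampled i.i.d. from η independently of f_n, converge to a stationary distribution ψ_α with finite first moment. Then the mean of the stationary distribution equals the fixed point of T^π: if f_α ∼ ψ_α, then E[f_α] = f^π. -/
/-!
Averaging the stationarity identity `ψ = law((1 - α) f + α T̂(f, ω))` over `f ∼ ψ`, `ω ∼ η`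
and using `E_ω[T̂(f, ω)] = T^π f` shows that the mean `m` of `ψ` satisfies
`m = (1 - α) m + α T^π m`, i.e. `m = T^π m` since `α ≠ 0`. As `P^π` is row stochastic, `T^π` is a
`γ`-contraction for the sup norm, so its fixed point is unique and `m = f^π`.
-/

open MeasureTheory

namespace MeasureTheory.Measure

variable {α β γ : Type*} [MeasurableSpace α] [MeasurableSpace β] [MeasurableSpace γ]
  (μ : Measure α) (ν : Measure β) [SFinite ν]

theorem bind_map_eq_map_prod {G : α × β → γ} (hG : Measurable G) :
    μ.bind (fun a => ν.map fun b => G (a, b)) = (μ.prod ν).map G := by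
  have hkernel : Measurable fun a => ν.map fun b => G (a, b) := by
    have : (fun a => ν.map fun b => G (a, b)) = fun a => (ν.map (Prod.mk a)).map G :=
      funext fun a => (map_map hG measurable_prodMk_left).symm
    exact this ▸ (measurable_map G hG).comp Measurable.map_prodMk_left
  ext s hs
  rw [map_apply hG hs, prod_apply (hG hs), bind_apply hs hkernel.aemeasurable]
  refine lintegral_congr fun a => ?_
  exact map_apply (hG.comp measurable_prodMk_left) hs

theorem bind_map_eq_map_prod_of_aemeasurable {G : α × β → γ} (hG : AEMeasurable G (μ.prod ν)) :
    μ.bind (fun a => ν.map fun b => G (a, b)) = (μ.prod ν).map G :=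
  calc μ.bind (fun a => ν.map fun b => G (a, b))
      = μ.bind (fun a => ν.map fun b => hG.mk G (a, b)) := by
        refine bind_congr_right ?_
        filter_upwards [ae_ae_of_ae_prod hG.ae_eq_mk] with a ha
        exact map_congr ha
    _ = (μ.prod ν).map (hG.mk G) := bind_map_eq_map_prod μ ν hG.measurable_mk
    _ = (μ.prod ν).map G := map_congr hG.ae_eq_mk.symm

end MeasureTheory.Measure

section Stationary

variable {E Ω : Type*} [NormedAddCommGroup E] [NormedSpace ℝ E]
  [MeasurableSpace E] [BorelSpace E] [MeasurableSpace Ω]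

theorem integral_eq_integral_integral_of_bind_eq_self {ψ : Measure E} [SFinite ψ]
    {η : Measure Ω} [IsProbabilityMeasure η] {T : E → Ω → E} {α : ℝ} (hα : α ≠ 0)
    (hstat : ψ.bind (fun f => η.map fun ω => (1 - α) • f + α • T f ω) = ψ)
    (hmom : Integrable id ψ) (hT : Integrable (fun p : E × Ω => T p.1 p.2) (ψ.prod η)) :
    ∫ f, f ∂ψ = ∫ f, ∫ ω, T f ω ∂η ∂ψ := by
  have hfst : Integrable (fun p : E × Ω => p.1) (ψ.prod η) := hmom.comp_fst η
  have hF : Integrable (fun p : E × Ω => (1 - α) • p.1 + α • T p.1 p.2) (ψ.prod η) :=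
    (hfst.smul (1 - α)).add (hT.smul α)
  have hupdate : ψ = (ψ.prod η).map fun p => (1 - α) • p.1 + α • T p.1 p.2 := by
    rw [← Measure.bind_map_eq_map_prod_of_aemeasurable ψ η hF.aemeasurable]
    exact hstat.symm
  have hmean : ∫ f, f ∂ψ = (1 - α) • ∫ f, f ∂ψ + α • ∫ f, ∫ ω, T f ω ∂η ∂ψ :=
    calc ∫ f, f ∂ψ
        = ∫ f, f ∂((ψ.prod η).map fun p => (1 - α) • p.1 + α • T p.1 p.2) := by
          rw [← hupdate]
      _ = ∫ p, ((1 - α) • p.1 + α • T p.1 p.2) ∂(ψ.prod η) :=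
          integral_map hF.aemeasurable (by rw [← hupdate]; exact hmom.aestronglyMeasurable)
      _ = (1 - α) • ∫ f, f ∂ψ + α • ∫ f, ∫ ω, T f ω ∂η ∂ψ := by
          have hfst' : Integrable (fun p : E × Ω => (1 - α) • p.1) (ψ.prod η) := hfst.smul _
          have hT' : Integrable (fun p : E × Ω => α • T p.1 p.2) (ψ.prod η) := hT.smul _
          rw [integral_add hfst' hT', integral_smul, integral_smul,
            integral_fun_fst (fun f : E => f), integral_prod _ hT, probReal_univ, one_smul]
  refine smul_right_injective E hα ?_
  linear_combination (norm := module) hmean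

end Stationary

namespace Matrix

variable {m n : Type*} [Fintype m] [Fintype n]

theorem integrable_mulVec {X : Type*} [MeasurableSpace X] {μ : Measure X} (A : Matrix m n ℝ)
    {f : X → n → ℝ} (hf : Integrable f μ) : Integrable (fun x => A *ᵥ f x) μ :=
  A.mulVecLin.toContinuousLinearMap.integrable_comp hf

theorem integral_mulVec {X : Type*} [MeasurableSpace X] {μ : Measure X} (A : Matrix m n ℝ)
    {f : X → n → ℝ} (hf : Integrable f μ) : ∫ x, A *ᵥ f x ∂μ = A *ᵥ ∫ x, f x ∂μ :=
  A.mulVecLin.toContinuousLinearMap.integral_comp_comm hf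

theorem norm_mulVec_le_of_mem_rowStochastic [DecidableEq n] {P : Matrix n n ℝ}
    (hP : P ∈ rowStochastic ℝ n) (v : n → ℝ) : ‖P *ᵥ v‖ ≤ ‖v‖ := by
  refine (pi_norm_le_iff_of_nonneg (norm_nonneg v)).mpr fun i => ?_
  calc ‖(P *ᵥ v) i‖ = ‖∑ j, P i j * v j‖ := rfl
    _ ≤ ∑ j, ‖P i j * v j‖ := norm_sum_le _ _
    _ ≤ ∑ j, P i j * ‖v‖ := Finset.sum_le_sum fun j _ => by
      rw [norm_mul, Real.norm_of_nonneg (nonneg_of_mem_rowStochastic hP)]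
      exact mul_le_mul_of_nonneg_left (norm_le_pi_norm v j) (nonneg_of_mem_rowStochastic hP)
    _ = ‖v‖ := by rw [← Finset.sum_mul, sum_row_of_mem_rowStochastic hP, one_mul]

theorem bellman_fixedPoint_unique [DecidableEq n] {R : n → ℝ} {P : Matrix n n ℝ}
    (hP : P ∈ rowStochastic ℝ n) {γ : ℝ} (hγ : |γ| < 1) {v w : n → ℝ}
    (hv : R + γ • P *ᵥ v = v) (hw : R + γ • P *ᵥ w = w) : v = w := by
  have hdiff : v - w = γ • P *ᵥ (v - w) := by
    rw [mulVec_sub, smul_sub]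
    linear_combination (norm := module) hw - hv
  have hcontract : ‖v - w‖ ≤ |γ| * ‖v - w‖ :=
    calc ‖v - w‖ = |γ| * ‖P *ᵥ (v - w)‖ := by
          conv_lhs => rw [hdiff, norm_smul, Real.norm_eq_abs]
      _ ≤ |γ| * ‖v - w‖ :=
          mul_le_mul_of_nonneg_left (norm_mulVec_le_of_mem_rowStochastic hP _) (abs_nonneg γ)
  have hzero : ‖v - w‖ = 0 := by nlinarith [norm_nonneg (v - w)]
  exact sub_eq_zero.mp (norm_eq_zero.mp hzero)

end Matrix

theorem stationary_distribution_mean_is_value_function_general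
    {d : ℕ} {Ω : Type*} [MeasurableSpace Ω]
    (η : Measure Ω) (hη : IsProbabilityMeasure η)
    -- the (affine) Bellman operator T^π f = R^π + γ P^π f
    (Rπ : Fin d → ℝ) (Pπ : Matrix (Fin d) (Fin d) ℝ)
    (hPnn : ∀ i j, 0 ≤ Pπ i j) (hProw : ∀ i, ∑ j, Pπ i j = 1)
    (γ : ℝ) (hγ0 : 0 ≤ γ) (hγ1 : γ < 1)
    -- the stochastic operator, an empirical Bellman operator for π
    (That : (Fin d → ℝ) → Ω → (Fin d → ℝ))
    (hEmp : ∀ f, ∫ ω, That f ω ∂η = Rπ + γ • Pπ.mulVec f)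
    (α : ℝ) (hα0 : 0 < α)
    -- the stationary distribution of the update f ↦ (1−α) f + α T̂(f,ω)
    (ψ : Measure (Fin d → ℝ)) (hψ : IsProbabilityMeasure ψ)
    (hstat : ψ.bind (fun f => η.map fun ω => (1 - α) • f + α • That f ω) = ψ)
    -- finite first moment, and integrability of the stochastic target
    (hmom : Integrable (id : (Fin d → ℝ) → (Fin d → ℝ)) ψ)
    (hTint : Integrable (fun p : (Fin d → ℝ) × Ω => That p.1 p.2) (ψ.prod η))
    -- the fixed point of T^π
    (fπ : Fin d → ℝ) (hfix : Rπ + γ • Pπ.mulVec fπ = fπ) :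
    ∫ f, f ∂ψ = fπ := by
  have hP : Pπ ∈ Matrix.rowStochastic ℝ (Fin d) :=
    Matrix.mem_rowStochastic_iff_sum.mpr ⟨hPnn, hProw⟩
  have hbellman : ∫ f, f ∂ψ = Rπ + γ • Pπ.mulVec (∫ f, f ∂ψ) :=
    calc ∫ f, f ∂ψ = ∫ f, (Rπ + γ • Pπ.mulVec f) ∂ψ := by
          simpa only [hEmp] using
            integral_eq_integral_integral_of_bind_eq_self hα0.ne' hstat hmom hTint
      _ = Rπ + γ • Pπ.mulVec (∫ f, f ∂ψ) := by
          have hPf : Integrable (fun f => γ • Pπ.mulVec f) ψ :=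
            (Pπ.integrable_mulVec hmom).smul γ
          rw [integral_add (integrable_const Rπ) hPf, integral_const, probReal_univ, one_smul,
            integral_smul, Pπ.integral_mulVec (f := fun f => f) hmom]
  have hγ : |γ| < 1 := abs_lt.mpr ⟨by linarith, hγ1⟩
  exact Matrix.bellman_fixedPoint_unique hP hγ hbellman.symm hfix

theorem stationary_distribution_mean_is_value_function
    {d : ℕ} {Ω : Type*} [MeasurableSpace Ω]
    (η : Measure Ω) (hη : IsProbabilityMeasure η)
    -- the (affine) Bellman operator T^π f = R^π + γ P^π f
    (Rπ : Fin d → ℝ) (Pπ : Matrix (Fin d) (Fin d) ℝ)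
    (hPnn : ∀ i j, 0 ≤ Pπ i j) (hProw : ∀ i, ∑ j, Pπ i j = 1)
    (γ : ℝ) (hγ0 : 0 ≤ γ) (hγ1 : γ < 1)
    -- the stochastic operator, an empirical Bellman operator for π
    (That : (Fin d → ℝ) → Ω → (Fin d → ℝ))
    (hEmp : ∀ f, ∫ ω, That f ω ∂η = Rπ + γ • Pπ.mulVec f)
    (α : ℝ) (hα0 : 0 < α) (hα1 : α ≤ 1)
    -- the stationary distribution of the update f ↦ (1−α) f + α T̂(f,ω)
    (ψ : Measure (Fin d → ℝ)) (hψ : IsProbabilityMeasure ψ)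
    (hstat : ψ.bind (fun f => η.map fun ω => (1 - α) • f + α • That f ω) = ψ)
    -- finite first moment, and integrability of the stochastic target
    (hmom : Integrable (id : (Fin d → ℝ) → (Fin d → ℝ)) ψ)
    (hTint : Integrable (fun p : (Fin d → ℝ) × Ω => That p.1 p.2) (ψ.prod η))
    -- the fixed point of T^π
    (fπ : Fin d → ℝ) (hfix : Rπ + γ • Pπ.mulVec fπ = fπ) :
    ∫ f, f ∂ψ = fπ :=
  stationary_distribution_mean_is_value_function_general η hη Rπ Pπ hPnn hProw γ hγ0 hγ1 That hEmp α
    hα0 ψ hψ hstat hmom hTint fπ hfix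
end

section
/- For step-size α = 1 and any initialization Q₀ ∼ μ₀ with finite first moment on ℝ^{|S|×|A|}, the sequence of random action-value functions (Q_n)_{n≥0} generated by optimistic policy iteration — Q_{n+1}(s,a) = G^{π_n}(s,a) where π_n is the greedy policy for Q_n and G^{π_n}(s,a) is an independently sampled discounted return from (s,a) following π_n — converges in distribution to a unique stationary distribution φ₁; equivalently, the induced finite Markov chain on deterministic policies with kernel K(π,π') = P{π' is greedy with respect to G^π} converges from every initial policy to a unique stationary distribution on policies. -/
/-!
For each state, the greedy choice for independent sampled returns coincides with the greedy choice
for their means with positive probability: by the first moment method each return falls on the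
appropriate side of the largest mean with positive probability. So the OPI kernel charges the
policy-iteration step `π ↦ greedy(Q^π)`. Policy iteration improves values, and its fixed points
are optimal and hence all equal, so after `|Π|` steps it sends every policy to one policy `π⋆`.
Thus the column `π⋆` of `K^|Π|` is positive. This Doeblin condition makes `K^|Π|` contract
differences of distributions in `ℓ¹`, which gives a unique stationary distribution and
convergence to it.
-/

open MeasureTheory Filter Matrix Finset Set Topology Function

/-- The greedy policy for an action-value function `Q`, with the fixed consistent
tie-breaking rule given by a linear order on actions (least maximizer). -/
noncomputable def greedySel {S A : Type*} [Fintype A] [Nonempty A] [LinearOrder A]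
    (Q : S → A → ℝ) (s : S) : A := by
  classical
  exact (Finset.univ.filter fun a => ∀ a', Q s a' ≤ Q s a).min' (by
    obtain ⟨a, -, ha⟩ := Finset.exists_max_image Finset.univ (fun a => Q s a)
      ⟨Classical.arbitrary A, Finset.mem_univ _⟩
    exact ⟨a, Finset.mem_filter.mpr
      ⟨Finset.mem_univ _, fun a' => ha a' (Finset.mem_univ _)⟩⟩)

/-- The optimistic-policy-iteration kernel on deterministic policies:
`K π π'` is the probability that `π'` is the greedy policy for the (mutually
independent) sampled returns `G^π`. -/
noncomputable def opiKernel {S A : Type*} [Fintype S] [Fintype A] [Nonempty A] [LinearOrder A]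
    (ret : (S → A) → S → A → Measure ℝ) (π π' : S → A) : ENNReal :=
  (Measure.pi fun s => Measure.pi fun a => ret π s a) {g : S → A → ℝ | greedySel g = π'}

/-- One step of the induced Markov chain on distributions over policies:
`(μ K)(π') = Σ_π μ(π) K(π,π')`. -/
noncomputable def opiStep {S A : Type*} [Fintype S] [DecidableEq S]
    [Fintype A] [Nonempty A] [LinearOrder A]
    (ret : (S → A) → S → A → Measure ℝ) (μ : (S → A) → ℝ) : (S → A) → ℝ :=
  fun π' => ∑ π : S → A, μ π * (opiKernel ret π π').toReal

section LeastArgmax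

variable {A : Type*} [LinearOrder A]

def IsLeastArgmax (h : A → ℝ) (a : A) : Prop :=
  (∀ b, h b ≤ h a) ∧ ∀ b < a, h b < h a

theorem greedySel_eq_iff [Fintype A] [Nonempty A] {S : Type*} (Q : S → A → ℝ) (s : S) (a : A) :
    greedySel Q s = a ↔ IsLeastArgmax (Q s) a := by
  classical
  simp only [greedySel, Finset.min'_eq_iff, Finset.mem_filter, Finset.mem_univ, true_and,
    IsLeastArgmax]
  refine ⟨fun ⟨hmax, hleast⟩ => ⟨hmax, fun b hb => ?_⟩,
    fun ⟨hmax, hleast⟩ => ⟨hmax, fun b hb => ?_⟩⟩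
  · by_contra! hab
    exact (hleast b fun c => (hmax c).trans hab).not_gt hb
  · by_contra! hba
    exact (hb a).not_gt (hleast b hba)

theorem le_greedySel [Fintype A] [Nonempty A] {S : Type*} (Q : S → A → ℝ) (s : S) (b : A) :
    Q s b ≤ Q s (greedySel Q s) :=
  ((greedySel_eq_iff Q s _).1 rfl).1 b

theorem measurableSet_setOf_isLeastArgmax [Finite A] (a : A) :
    MeasurableSet {h : A → ℝ | IsLeastArgmax h a} := by
  simp only [IsLeastArgmax, Set.ofPred_and, Set.ofPred_forall]
  exact (MeasurableSet.iInter fun b =>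
      measurableSet_le (measurable_pi_apply b) (measurable_pi_apply a)).inter
    (MeasurableSet.iInter fun b => MeasurableSet.iInter fun _ =>
      measurableSet_lt (measurable_pi_apply b) (measurable_pi_apply a))

theorem measure_pi_setOf_isLeastArgmax_pos [Fintype A] (ν : A → Measure ℝ)
    [∀ a, IsProbabilityMeasure (ν a)] (hint : ∀ a, Integrable (fun x => x) (ν a)) {a : A}
    (ha : IsLeastArgmax (fun b => ∫ x, x ∂ν b) a) :
    0 < Measure.pi ν {h | IsLeastArgmax h a} := by
  set m := fun b => ∫ x, x ∂ν b
  -- by the first moment method `ν b` charges both sides of its mean; `E b` is the side of `m a`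
  -- on which `h b` keeps `a` the least argmax
  let E : A → Set ℝ := fun b =>
    if b = a then Ici (m a) else if b < a then Iio (m a) else Iic (m a)
  have hE : ∀ b, 0 < ν b (E b) := by
    intro b
    have hlow : 0 < ν b (Iic (m b)) := measure_le_integral_pos (hint b)
    simp only [E]
    split_ifs with hba hlt
    · exact hba ▸ measure_integral_le_pos (hint b)
    · exact hlow.trans_le (measure_mono (Iic_subset_Iio.2 (ha.2 b hlt)))
    · exact hlow.trans_le (measure_mono (Iic_subset_Iic.2 (ha.1 b)))
  have hsub : univ.pi E ⊆ {h | IsLeastArgmax h a} := by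
    intro h hmem
    have hh : ∀ b, h b ∈ E b := fun b => hmem b (mem_univ b)
    have hmax : m a ≤ h a := by simpa [E] using hh a
    have hlt : ∀ b < a, h b < m a := fun b hb => by simpa [E, hb.ne, hb] using hh b
    refine ⟨fun b => ?_, fun b hb => (hlt b hb).trans_le hmax⟩
    rcases lt_trichotomy b a with hb | rfl | hb
    · exact (hlt b hb).le.trans hmax
    · exact le_rfl
    · exact le_trans (by simpa [E, hb.ne', hb.not_gt] using hh b) hmax
  calc 0 < ∏ b, ν b (E b) := pos_iff_ne_zero.2 (prod_ne_zero_iff.2 fun b _ => (hE b).ne')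
    _ = Measure.pi ν (univ.pi E) := (Measure.pi_pi ν E).symm
    _ ≤ _ := measure_mono hsub

end LeastArgmax

section Kernel

variable {S A : Type*} [Fintype A] [Nonempty A] [LinearOrder A]

theorem setOf_greedySel_eq (π' : S → A) :
    {g : S → A → ℝ | greedySel g = π'} = univ.pi fun s => {h | IsLeastArgmax h (π' s)} := by
  ext g
  simp [funext_iff, greedySel_eq_iff]

variable [Fintype S]

theorem measurableSet_setOf_greedySel_eq (π' : S → A) :
    MeasurableSet {g : S → A → ℝ | greedySel g = π'} := by
  rw [setOf_greedySel_eq]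
  exact MeasurableSet.univ_pi fun s => measurableSet_setOf_isLeastArgmax _

variable (ret : (S → A) → S → A → Measure ℝ)

theorem opiKernel_greedySel_pos (π : S → A) [∀ s a, IsProbabilityMeasure (ret π s a)]
    (hint : ∀ s a, Integrable (fun x => x) (ret π s a)) {Q : S → A → ℝ}
    (hmean : ∀ s a, ∫ x, x ∂ret π s a = Q s a) :
    0 < opiKernel ret π (greedySel Q) := by
  rw [opiKernel, setOf_greedySel_eq, Measure.pi_pi]
  refine pos_iff_ne_zero.2 (prod_ne_zero_iff.2 fun s _ => ?_)
  refine (measure_pi_setOf_isLeastArgmax_pos _ (hint s) ?_).ne'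
  simpa only [hmean] using (greedySel_eq_iff Q s _).1 rfl

theorem opiKernel_mem_rowStochastic [DecidableEq S] [∀ π s a, IsProbabilityMeasure (ret π s a)] :
    Matrix.of (fun π π' => (opiKernel ret π π').toReal) ∈ rowStochastic ℝ (S → A) := by
  refine mem_rowStochastic_iff_sum.2 ⟨fun _ _ => ENNReal.toReal_nonneg, fun π => ?_⟩
  have hsum : ∑ π', opiKernel ret π π' = 1 := by
    have h := sum_measure_preimage_singleton (f := greedySel (S := S) (A := A))
      (μ := Measure.pi fun s => Measure.pi fun a => ret π s a) univ
      fun π' _ => measurableSet_setOf_greedySel_eq π'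
    rwa [coe_univ, preimage_univ, measure_univ] at h
  have hfin : ∀ π', opiKernel ret π π' ≠ ⊤ := fun _ => measure_ne_top _ _
  rw [← ENNReal.toReal_one, ← hsum, ENNReal.toReal_sum fun π' _ => hfin π']
  rfl

end Kernel

section FiniteMarkovChain

variable {n : Type*} [Fintype n]

def l1Norm (v : n → ℝ) : ℝ := ∑ i, |v i|

theorem norm_le_l1Norm (v : n → ℝ) : ‖v‖ ≤ l1Norm v :=
  (pi_norm_le_iff_of_nonneg (sum_nonneg fun i _ => abs_nonneg (v i))).2 fun i =>
    (Real.norm_eq_abs _).trans_le (single_le_sum (fun j _ => abs_nonneg (v j)) (mem_univ i))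

theorem l1Norm_sub_le_two {x y : n → ℝ} (hx : x ∈ stdSimplex ℝ n) (hy : y ∈ stdSimplex ℝ n) :
    l1Norm (x - y) ≤ 2 :=
  calc l1Norm (x - y) ≤ ∑ i, (x i + y i) := sum_le_sum fun i _ =>
        (abs_sub (x i) (y i)).trans_eq (by rw [abs_of_nonneg (hx.1 i), abs_of_nonneg (hy.1 i)])
    _ = 2 := by rw [sum_add_distrib, hx.2, hy.2]; norm_num

variable [DecidableEq n]

theorem iterate_vecMul {R : Type*} [Semiring R] (M : Matrix n n R) (k : ℕ) (x : n → R) :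
    (fun v => v ᵥ* M)^[k] x = x ᵥ* M ^ k := by
  induction k with
  | zero => simp
  | succ k ih => rw [Function.iterate_succ_apply', ih, vecMul_vecMul, pow_succ]

theorem vecMul_pow_eq_self {R : Type*} [Semiring R] {M : Matrix n n R} {x : n → R}
    (h : x ᵥ* M = x) (k : ℕ) : x ᵥ* M ^ k = x := by
  rw [← iterate_vecMul]
  exact Function.iterate_fixed h k

variable {M : Matrix n n ℝ}

theorem sum_vecMul_of_mem_rowStochastic (hM : M ∈ rowStochastic ℝ n) (x : n → ℝ) :
    ∑ j, (x ᵥ* M) j = ∑ i, x i := by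
  rw [← dotProduct_one, ← dotProduct_mulVec, one_vecMul_of_mem_rowStochastic hM, dotProduct_one]

theorem vecMul_mem_stdSimplex (hM : M ∈ rowStochastic ℝ n) {x : n → ℝ}
    (hx : x ∈ stdSimplex ℝ n) : x ᵥ* M ∈ stdSimplex ℝ n :=
  ⟨nonneg_vecMul_of_mem_rowStochastic hM hx.1, (sum_vecMul_of_mem_rowStochastic hM x).trans hx.2⟩

theorem pow_apply_iterate_pos (hM : M ∈ rowStochastic ℝ n) {g : n → n}
    (hg : ∀ i, 0 < M i (g i)) (k : ℕ) (i : n) : 0 < (M ^ k) i (g^[k] i) := by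
  induction k with
  | zero => simp
  | succ k ih =>
    rw [pow_succ, mul_apply, Function.iterate_succ_apply']
    exact sum_pos' (fun j _ => mul_nonneg ((pow_mem hM k).1 i j) (hM.1 j _))
      ⟨_, mem_univ _, mul_pos ih (hg _)⟩

theorem l1Norm_vecMul_le (hM : M ∈ rowStochastic ℝ n) {q : n} {δ : ℝ} (hδ : ∀ i, δ ≤ M i q)
    {v : n → ℝ} (hv : ∑ i, v i = 0) : l1Norm (v ᵥ* M) ≤ (1 - δ) * l1Norm v := by
  -- as `v` sums to zero, removing `δ` from the column `q` of `M` does not change `v ᵥ* M`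
  set M' : n → n → ℝ := fun i j => M i j - if j = q then δ else 0
  have hM'_nonneg : ∀ i j, 0 ≤ M' i j := fun i j => by
    simp only [M']
    split_ifs with hj
    · exact sub_nonneg.2 (hj ▸ hδ i)
    · exact (sub_zero (M i j)).symm ▸ hM.1 i j
  have hM'_sum : ∀ i, ∑ j, M' i j = 1 - δ := fun i => by
    simp [M', sum_sub_distrib, sum_row_of_mem_rowStochastic hM]
  have hvM : ∀ j, (v ᵥ* M) j = ∑ i, v i * M' i j := fun j => by
    simp only [M', mul_sub, sum_sub_distrib, ← sum_mul, hv, zero_mul, sub_zero]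
    rfl
  calc l1Norm (v ᵥ* M) = ∑ j, |∑ i, v i * M' i j| := by simp only [l1Norm, hvM]
    _ ≤ ∑ j, ∑ i, |v i| * M' i j := sum_le_sum fun j _ => (abs_sum_le_sum_abs _ _).trans_eq
        (sum_congr rfl fun i _ => by rw [abs_mul, abs_of_nonneg (hM'_nonneg i j)])
    _ = ∑ i, |v i| * (1 - δ) := by simp only [sum_comm (γ := n), ← mul_sum, hM'_sum]
    _ = (1 - δ) * l1Norm v := by rw [l1Norm, ← sum_mul, mul_comm]

variable [Nonempty n]

theorem l1Norm_vecMul_pow_le (hM : M ∈ rowStochastic ℝ n) {N : ℕ} {q : n} {δ : ℝ}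
    (hδ : ∀ i, δ ≤ (M ^ N) i q) {v : n → ℝ} (hv : ∑ i, v i = 0) (k : ℕ) :
    l1Norm (v ᵥ* M ^ k) ≤ (1 - δ) ^ (k / N) * l1Norm v := by
  have hpow : ∀ m, M ^ m ∈ rowStochastic ℝ n := pow_mem hM
  have hδ_le : 0 ≤ 1 - δ :=
    sub_nonneg.2 ((hδ (Classical.arbitrary n)).trans (le_one_of_mem_rowStochastic (hpow N)))
  have hblocks : ∀ j, l1Norm (v ᵥ* (M ^ N) ^ j) ≤ (1 - δ) ^ j * l1Norm v := by
    intro j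
    induction j with
    | zero => simp
    | succ j ih =>
      rw [pow_succ, ← vecMul_vecMul, pow_succ', mul_assoc]
      refine (l1Norm_vecMul_le (hpow N) hδ ?_).trans (mul_le_mul_of_nonneg_left ih hδ_le)
      rw [sum_vecMul_of_mem_rowStochastic (pow_mem (hpow N) j), hv]
  calc l1Norm (v ᵥ* M ^ k) = l1Norm ((v ᵥ* (M ^ N) ^ (k / N)) ᵥ* M ^ (k % N)) := by
        rw [vecMul_vecMul, ← pow_mul, ← pow_add, Nat.div_add_mod]
    _ ≤ l1Norm (v ᵥ* (M ^ N) ^ (k / N)) := by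
        have hsum : ∑ i, (v ᵥ* (M ^ N) ^ (k / N)) i = 0 := by
          rw [sum_vecMul_of_mem_rowStochastic (pow_mem (hpow N) _), hv]
        simpa using l1Norm_vecMul_le (hpow (k % N)) (q := q) (fun i => (hpow _).1 i q) hsum
    _ ≤ (1 - δ) ^ (k / N) * l1Norm v := hblocks _

theorem dist_vecMul_pow_le (hM : M ∈ rowStochastic ℝ n) {N : ℕ} {q : n} {δ : ℝ}
    (hδ : ∀ i, δ ≤ (M ^ N) i q) {x y : n → ℝ} (hx : x ∈ stdSimplex ℝ n)
    (hy : y ∈ stdSimplex ℝ n) (k : ℕ) :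
    dist (x ᵥ* M ^ k) (y ᵥ* M ^ k) ≤ 2 * (1 - δ) ^ (k / N) := by
  have hδ_le : 0 ≤ 1 - δ := sub_nonneg.2 ((hδ (Classical.arbitrary n)).trans
    (le_one_of_mem_rowStochastic (pow_mem hM N)))
  have hsum : ∑ i, (x - y) i = 0 := by simp [sum_sub_distrib, hx.2, hy.2]
  rw [dist_eq_norm, ← sub_vecMul]
  calc ‖(x - y) ᵥ* M ^ k‖ ≤ l1Norm ((x - y) ᵥ* M ^ k) := norm_le_l1Norm _
    _ ≤ (1 - δ) ^ (k / N) * l1Norm (x - y) := l1Norm_vecMul_pow_le hM hδ hsum k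
    _ ≤ (1 - δ) ^ (k / N) * 2 :=
        mul_le_mul_of_nonneg_left (l1Norm_sub_le_two hx hy) (pow_nonneg hδ_le _)
    _ = 2 * (1 - δ) ^ (k / N) := mul_comm _ _

theorem exists_stationary_of_dist_vecMul_pow_le (hM : M ∈ rowStochastic ℝ n) {r : ℕ → ℝ}
    (hr : Tendsto r atTop (𝓝 0))
    (hdist : ∀ x ∈ stdSimplex ℝ n, ∀ y ∈ stdSimplex ℝ n, ∀ k,
      dist (x ᵥ* M ^ k) (y ᵥ* M ^ k) ≤ r k) :
    ∃ φ ∈ stdSimplex ℝ n, φ ᵥ* M = φ ∧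
      ∀ μ ∈ stdSimplex ℝ n, Tendsto (fun k => μ ᵥ* M ^ k) atTop (𝓝 φ) := by
  have hmem : ∀ x ∈ stdSimplex ℝ n, ∀ k, x ᵥ* M ^ k ∈ stdSimplex ℝ n :=
    fun x hx k => vecMul_mem_stdSimplex (pow_mem hM k) hx
  set x₀ : n → ℝ := Pi.single (Classical.arbitrary n) 1
  have hx₀ : x₀ ∈ stdSimplex ℝ n := single_mem_stdSimplex ℝ _
  have hcauchy : CauchySeq fun k => x₀ ᵥ* M ^ k := by
    refine cauchySeq_of_le_tendsto_0 r (fun k k' K hk hk' => ?_) hr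
    have hshift : ∀ m ≥ K, x₀ ᵥ* M ^ m = (x₀ ᵥ* M ^ (m - K)) ᵥ* M ^ K := fun m hm => by
      rw [vecMul_vecMul, ← pow_add, Nat.sub_add_cancel hm]
    rw [hshift k hk, hshift k' hk']
    exact hdist _ (hmem _ hx₀ _) _ (hmem _ hx₀ _) K
  obtain ⟨φ, hφ⟩ := cauchySeq_tendsto_of_complete hcauchy
  have hφ_mem : φ ∈ stdSimplex ℝ n :=
    (isClosed_stdSimplex ℝ n).mem_of_tendsto hφ (Eventually.of_forall (hmem _ hx₀))
  have hstat : φ ᵥ* M = φ := by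
    have h : Tendsto (fun k => x₀ ᵥ* M ^ (k + 1)) atTop (𝓝 (φ ᵥ* M)) := by
      simp only [pow_succ, ← vecMul_vecMul]
      exact ((continuous_id.matrix_vecMul continuous_const).tendsto φ).comp hφ
    exact tendsto_nhds_unique h (hφ.comp (tendsto_add_atTop_nat 1))
  refine ⟨φ, hφ_mem, hstat, fun μ hμ => ?_⟩
  rw [tendsto_iff_dist_tendsto_zero]
  refine squeeze_zero (fun _ => dist_nonneg) (fun k => ?_) hr
  simpa only [vecMul_pow_eq_self hstat] using hdist μ hμ φ hφ_mem k

theorem exists_unique_stationary_of_doeblin (hM : M ∈ rowStochastic ℝ n) {N : ℕ} (hN : N ≠ 0)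
    {q : n} (hpos : ∀ i, 0 < (M ^ N) i q) :
    ∃ φ ∈ stdSimplex ℝ n, φ ᵥ* M = φ ∧ (∀ φ' ∈ stdSimplex ℝ n, φ' ᵥ* M = φ' → φ' = φ) ∧
      ∀ μ ∈ stdSimplex ℝ n, Tendsto (fun k => μ ᵥ* M ^ k) atTop (𝓝 φ) := by
  obtain ⟨i₀, hi₀⟩ := Finite.exists_min fun i => (M ^ N) i q
  have hrate : Tendsto (fun k => 2 * (1 - (M ^ N) i₀ q) ^ (k / N)) atTop (𝓝 0) := by
    have h := (tendsto_pow_atTop_nhds_zero_of_lt_one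
      (sub_nonneg.2 (le_one_of_mem_rowStochastic (pow_mem hM N))) (by linarith [hpos i₀])).comp
      (Nat.tendsto_div_const_atTop hN)
    simpa using h.const_mul 2
  obtain ⟨φ, hφ, hstat, hconv⟩ :=
    exists_stationary_of_dist_vecMul_pow_le hM hrate fun x hx y hy k =>
      dist_vecMul_pow_le hM hi₀ hx hy k
  refine ⟨φ, hφ, hstat, fun φ' hφ' hstat' => ?_, hconv⟩
  simpa only [vecMul_pow_eq_self hstat', tendsto_const_nhds_iff] using hconv φ' hφ'

end FiniteMarkovChain

theorem Function.isFixedPt_iterate_card {α β : Type*} [Fintype α] [PartialOrder β] {f : α → α}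
    (V : α → β) (hmono : ∀ x, V x ≤ V (f x)) (hstall : ∀ x, V (f x) ≤ V x → IsFixedPt f (f x))
    (x : α) : IsFixedPt f (f^[Fintype.card α] x) := by
  have horbit : Monotone fun k => V (f^[k] x) := monotone_nat_of_le_succ fun k => by
    simpa only [Function.iterate_succ_apply'] using hmono (f^[k] x)
  have of_repeat : ∀ i j : ℕ, i < j → j ≤ Fintype.card α → f^[i] x = f^[j] x →
      IsFixedPt f (f^[Fintype.card α] x) := by
    intro i j hij hj heq
    have hfix : IsFixedPt f (f^[i + 1] x) := by
      rw [Function.iterate_succ_apply']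
      refine hstall _ ?_
      calc V (f (f^[i] x)) = V (f^[i + 1] x) := by rw [Function.iterate_succ_apply']
        _ ≤ V (f^[j] x) := horbit hij
        _ = V (f^[i] x) := by rw [heq]
    rw [← Nat.sub_add_cancel (hij.trans_le hj : i + 1 ≤ Fintype.card α),
      Function.iterate_add_apply, Function.iterate_fixed hfix]
    exact hfix
  obtain ⟨i, j, hij, heq⟩ := Fintype.exists_ne_map_eq_of_card_lt
    (fun k : Fin (Fintype.card α + 1) => f^[k] x) (by simp)
  rcases Nat.lt_or_gt_of_ne (Fin.val_ne_of_ne hij) with h | h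
  · exact of_repeat i j h (Nat.lt_succ_iff.1 j.isLt) heq
  · exact of_repeat j i h (Nat.lt_succ_iff.1 i.isLt) heq.symm

theorem nonpos_of_le_discounted_avg {S : Type*} [Fintype S] {γ : ℝ} (hγ0 : 0 ≤ γ) (hγ1 : γ < 1)
    {p : S → S → ℝ} (hp : ∀ s, p s ∈ stdSimplex ℝ S) {d : S → ℝ}
    (hd : ∀ s, d s ≤ γ * ∑ s', p s s' * d s') (s : S) : d s ≤ 0 := by
  obtain ⟨s₀, -, hs₀⟩ := exists_max_image univ d ⟨s, mem_univ s⟩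
  have havg : ∑ s', p s₀ s' * d s' ≤ d s₀ :=
    calc ∑ s', p s₀ s' * d s' ≤ ∑ s', p s₀ s' * d s₀ := sum_le_sum fun s' _ =>
          mul_le_mul_of_nonneg_left (hs₀ s' (mem_univ _)) ((hp s₀).1 s')
      _ = d s₀ := by rw [← sum_mul, (hp s₀).2, one_mul]
  have hs₀_le : d s₀ ≤ γ * d s₀ := (hd s₀).trans (mul_le_mul_of_nonneg_left havg hγ0)
  nlinarith [hs₀ s (mem_univ s)]

noncomputable def policyIteration {S A : Type*} [Fintype A] [Nonempty A] [LinearOrder A]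
    (Qpi : (S → A) → S → A → ℝ) (π : S → A) : S → A :=
  greedySel (Qpi π)

theorem le_policyIteration {S A : Type*} [Fintype A] [Nonempty A] [LinearOrder A]
    (Qpi : (S → A) → S → A → ℝ) (π : S → A) (s : S) (a : A) :
    Qpi π s a ≤ Qpi π s (policyIteration Qpi π s) :=
  le_greedySel (Qpi π) s a

section PolicyIteration

variable {S A : Type*} [Fintype S] {γ : ℝ} {P : S → A → S → ℝ} {rbar : S → A → ℝ}
  {Qpi : (S → A) → S → A → ℝ}

theorem performance_difference
    (hbell : ∀ π s a, Qpi π s a = rbar s a + γ * ∑ s', P s a s' * Qpi π s' (π s'))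
    (π π' : S → A) (s : S) :
    Qpi π' s (π' s) - Qpi π s (π s) = (Qpi π s (π' s) - Qpi π s (π s)) +
      γ * ∑ s', P s (π' s) s' * (Qpi π' s' (π' s') - Qpi π s' (π s')) := by
  rw [hbell π' s (π' s), hbell π s (π' s)]
  simp only [mul_sub, sum_sub_distrib]
  ring

theorem value_le_of_advantage_nonneg (hγ0 : 0 ≤ γ) (hγ1 : γ < 1)
    (hP : ∀ s a, P s a ∈ stdSimplex ℝ S)
    (hbell : ∀ π s a, Qpi π s a = rbar s a + γ * ∑ s', P s a s' * Qpi π s' (π s'))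
    {π π' : S → A} (hadv : ∀ s, Qpi π s (π s) ≤ Qpi π s (π' s)) (s : S) :
    Qpi π s (π s) ≤ Qpi π' s (π' s) := by
  refine sub_nonpos.1 (nonpos_of_le_discounted_avg hγ0 hγ1 (fun s => hP s (π' s))
    (d := fun s => Qpi π s (π s) - Qpi π' s (π' s)) (fun s => ?_) s)
  have hdiff := performance_difference hbell π π' s
  simp only [mul_sub, sum_sub_distrib] at hdiff ⊢
  linarith [hadv s]

theorem value_le_of_advantage_nonpos (hγ0 : 0 ≤ γ) (hγ1 : γ < 1)
    (hP : ∀ s a, P s a ∈ stdSimplex ℝ S)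
    (hbell : ∀ π s a, Qpi π s a = rbar s a + γ * ∑ s', P s a s' * Qpi π s' (π s'))
    {π π' : S → A} (hadv : ∀ s, Qpi π s (π' s) ≤ Qpi π s (π s)) (s : S) :
    Qpi π' s (π' s) ≤ Qpi π s (π s) := by
  refine sub_nonpos.1 (nonpos_of_le_discounted_avg hγ0 hγ1 (fun s => hP s (π' s))
    (d := fun s => Qpi π' s (π' s) - Qpi π s (π s)) (fun s => ?_) s)
  have hdiff := performance_difference hbell π π' s
  linarith [hadv s]

theorem Qpi_eq_of_value_eq
    (hbell : ∀ π s a, Qpi π s a = rbar s a + γ * ∑ s', P s a s' * Qpi π s' (π s'))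
    {ρ σ : S → A} (h : ∀ s, Qpi ρ s (ρ s) = Qpi σ s (σ s)) : Qpi ρ = Qpi σ := by
  funext s a
  rw [hbell ρ, hbell σ]
  simp only [h]

variable [Fintype A] [Nonempty A] [LinearOrder A]

theorem value_le_value_policyIteration (hγ0 : 0 ≤ γ) (hγ1 : γ < 1)
    (hP : ∀ s a, P s a ∈ stdSimplex ℝ S)
    (hbell : ∀ π s a, Qpi π s a = rbar s a + γ * ∑ s', P s a s' * Qpi π s' (π s'))
    (π : S → A) (s : S) :
    Qpi π s (π s) ≤ Qpi (policyIteration Qpi π) s (policyIteration Qpi π s) :=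
  value_le_of_advantage_nonneg hγ0 hγ1 hP hbell (fun s => le_policyIteration Qpi π s (π s)) s

theorem isFixedPt_policyIteration_of_value_le (hγ0 : 0 ≤ γ) (hγ1 : γ < 1)
    (hP : ∀ s a, P s a ∈ stdSimplex ℝ S)
    (hbell : ∀ π s a, Qpi π s a = rbar s a + γ * ∑ s', P s a s' * Qpi π s' (π s'))
    {π : S → A} (h : ∀ s, Qpi (policyIteration Qpi π) s (policyIteration Qpi π s) ≤ Qpi π s (π s)) :
    IsFixedPt (policyIteration Qpi) (policyIteration Qpi π) := by
  have hQ : Qpi π = Qpi (policyIteration Qpi π) := Qpi_eq_of_value_eq hbell fun s =>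
    le_antisymm (value_le_value_policyIteration hγ0 hγ1 hP hbell π s) (h s)
  rw [IsFixedPt, policyIteration, ← hQ]
  rfl

theorem eq_of_isFixedPt_policyIteration (hγ0 : 0 ≤ γ) (hγ1 : γ < 1)
    (hP : ∀ s a, P s a ∈ stdSimplex ℝ S)
    (hbell : ∀ π s a, Qpi π s a = rbar s a + γ * ∑ s', P s a s' * Qpi π s' (π s'))
    {ρ σ : S → A} (hρ : IsFixedPt (policyIteration Qpi) ρ)
    (hσ : IsFixedPt (policyIteration Qpi) σ) : ρ = σ := by
  have hmax : ∀ {π}, IsFixedPt (policyIteration Qpi) π → ∀ s a, Qpi π s a ≤ Qpi π s (π s) :=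
    fun {π} hπ s a => by simpa only [hπ.eq] using le_policyIteration Qpi π s a
  have hV : ∀ s, Qpi ρ s (ρ s) = Qpi σ s (σ s) := fun s => le_antisymm
    (value_le_of_advantage_nonpos hγ0 hγ1 hP hbell (fun s => hmax hσ s (ρ s)) s)
    (value_le_of_advantage_nonpos hγ0 hγ1 hP hbell (fun s => hmax hρ s (σ s)) s)
  calc ρ = policyIteration Qpi ρ := hρ.eq.symm
    _ = policyIteration Qpi σ := by
        rw [policyIteration, policyIteration, Qpi_eq_of_value_eq hbell hV]
    _ = σ := hσ.eq

theorem exists_forall_iterate_card_policyIteration_eq [DecidableEq S] (hγ0 : 0 ≤ γ)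
    (hγ1 : γ < 1) (hP : ∀ s a, P s a ∈ stdSimplex ℝ S)
    (hbell : ∀ π s a, Qpi π s a = rbar s a + γ * ∑ s', P s a s' * Qpi π s' (π s')) :
    ∃ πstar : S → A, ∀ π, (policyIteration Qpi)^[Fintype.card (S → A)] π = πstar := by
  have hfix := Function.isFixedPt_iterate_card (fun π s => Qpi π s (π s))
    (value_le_value_policyIteration hγ0 hγ1 hP hbell)
    (fun _ h => isFixedPt_policyIteration_of_value_le hγ0 hγ1 hP hbell h)
  exact ⟨_, fun π => eq_of_isFixedPt_policyIteration hγ0 hγ1 hP hbell (hfix π)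
    (hfix (Classical.arbitrary _))⟩

end PolicyIteration

theorem opi_alpha_one_converges_to_unique_stationary_distribution_general
    {S A : Type*} [Fintype S] [DecidableEq S]
    [Fintype A] [Nonempty A] [LinearOrder A]
    (γ Rmax : ℝ) (hγ0 : 0 ≤ γ) (hγ1 : γ < 1)
    -- transition probabilities and mean rewards of the finite MDP
    (P : S → A → S → ℝ) (hPnn : ∀ s a s', 0 ≤ P s a s') (hProw : ∀ s a, ∑ s', P s a s' = 1)
    (rbar : S → A → ℝ)
    -- the action-value functions Q^π, satisfying the Bellman equations
    (Qpi : (S → A) → S → A → ℝ)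
    (hbell : ∀ π s a, Qpi π s a = rbar s a + γ * ∑ s', P s a s' * Qpi π s' (π s'))
    -- the return distributions G^π(s,a): mean Q^π(s,a), bounded support,
    -- mutually independent across state-action pairs (product measure in `opiKernel`)
    (ret : (S → A) → S → A → Measure ℝ)
    (hret : ∀ π s a, IsProbabilityMeasure (ret π s a))
    (hsupp : ∀ π s a, (ret π s a) (Set.Icc 0 (Rmax / (1 - γ)))ᶜ = 0)
    (hmean : ∀ π s a, (∫ x, x ∂ret π s a) = Qpi π s a) :
    ∃ φ : (S → A) → ℝ,
      (∀ π, 0 ≤ φ π) ∧ (∑ π : S → A, φ π = 1) ∧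
      opiStep ret φ = φ ∧
      (∀ φ' : (S → A) → ℝ, (∀ π, 0 ≤ φ' π) → (∑ π : S → A, φ' π = 1) →
        opiStep ret φ' = φ' → φ' = φ) ∧
      (∀ μ₀ : (S → A) → ℝ, (∀ π, 0 ≤ μ₀ π) → (∑ π : S → A, μ₀ π = 1) →
        Tendsto (fun n => (opiStep ret)^[n] μ₀) atTop (nhds φ)) := by
  set K : Matrix (S → A) (S → A) ℝ := Matrix.of fun π π' => (opiKernel ret π π').toReal
  have hstep : opiStep ret = fun μ => μ ᵥ* K := rfl
  have hK : K ∈ rowStochastic ℝ (S → A) := opiKernel_mem_rowStochastic ret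
  have hK_greedy : ∀ π, 0 < K π (policyIteration Qpi π) := fun π =>
    ENNReal.toReal_pos (opiKernel_greedySel_pos ret π (fun s a => Integrable.of_mem_Icc _ _
      aemeasurable_id (mem_ae_iff.2 (hsupp π s a))) (hmean π)).ne' (measure_ne_top _ _)
  obtain ⟨πstar, hπstar⟩ := exists_forall_iterate_card_policyIteration_eq hγ0 hγ1
    (fun s a => ⟨hPnn s a, hProw s a⟩) hbell
  obtain ⟨φ, ⟨hφ_nonneg, hφ_sum⟩, hstat, huniq, hconv⟩ :=
    exists_unique_stationary_of_doeblin hK Fintype.card_ne_zero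
      fun π => hπstar π ▸ pow_apply_iterate_pos hK hK_greedy _ π
  refine ⟨φ, hφ_nonneg, hφ_sum, hstat, fun φ' h0 h1 => huniq φ' ⟨h0, h1⟩, fun μ h0 h1 => ?_⟩
  simpa only [hstep, iterate_vecMul] using hconv μ ⟨h0, h1⟩

theorem opi_alpha_one_converges_to_unique_stationary_distribution
    {S A : Type*} [Fintype S] [DecidableEq S] [Nonempty S]
    [Fintype A] [Nonempty A] [LinearOrder A]
    (γ Rmax : ℝ) (hγ0 : 0 ≤ γ) (hγ1 : γ < 1) (hRmax : 0 ≤ Rmax)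
    -- transition probabilities and mean rewards of the finite MDP
    (P : S → A → S → ℝ) (hPnn : ∀ s a s', 0 ≤ P s a s') (hProw : ∀ s a, ∑ s', P s a s' = 1)
    (rbar : S → A → ℝ) (hrbar : ∀ s a, rbar s a ∈ Set.Icc 0 Rmax)
    -- the action-value functions Q^π, satisfying the Bellman equations
    (Qpi : (S → A) → S → A → ℝ)
    (hbell : ∀ π s a, Qpi π s a = rbar s a + γ * ∑ s', P s a s' * Qpi π s' (π s'))
    -- the return distributions G^π(s,a): mean Q^π(s,a), bounded support,
    -- mutually independent across state-action pairs (product measure in `opiKernel`)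
    (ret : (S → A) → S → A → Measure ℝ)
    (hret : ∀ π s a, IsProbabilityMeasure (ret π s a))
    (hsupp : ∀ π s a, (ret π s a) (Set.Icc 0 (Rmax / (1 - γ)))ᶜ = 0)
    (hmean : ∀ π s a, (∫ x, x ∂ret π s a) = Qpi π s a) :
    ∃ φ : (S → A) → ℝ,
      (∀ π, 0 ≤ φ π) ∧ (∑ π : S → A, φ π = 1) ∧
      opiStep ret φ = φ ∧
      (∀ φ' : (S → A) → ℝ, (∀ π, 0 ≤ φ' π) → (∑ π : S → A, φ' π = 1) →
        opiStep ret φ' = φ' → φ' = φ) ∧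
      (∀ μ₀ : (S → A) → ℝ, (∀ π, 0 ≤ μ₀ π) → (∑ π : S → A, μ₀ π = 1) →
        Tendsto (fun n => (opiStep ret)^[n] μ₀) atTop (nhds φ)) :=
  opi_alpha_one_converges_to_unique_stationary_distribution_general γ Rmax hγ0 hγ1 P hPnn hProw rbar
    Qpi hbell ret hret hsupp hmean
end

section
/- Let X₁, …, X_n be mutually independent real-valued random variables bounded in [a,b], with F_i the cumulative distribution function of X_i for i = 2, …, n. If E[F_i(X₁)] > 0 for every i = 2, …, n, then E[F₂(X₁) F₃(X₁) ⋯ F_n(X₁)] > 0; equivalently, if P{X₁ ≥ X_i} > 0 for every i individually, then P{X₁ ≥ X_i for all i = 2, …, n} > 0. -/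
/-!
The support `{f > 0}` of a monotone nonnegative function on a linear order is an upper set, and
finitely many upper sets form a chain, so the support of `∏ i, f i` is the support of one of the
`f i`. Since `E[f i (X₀)] > 0` just says that `X₀` falls into the support of `f i` with positive
probability, the first claim follows with `f i = F i`. For the second, independence and Fubini give
`P{X i ≤ X₀ for all i ∈ s} = E[∏ i ∈ s, G i (X₀)]` with `G i x = P{X i ≤ x}`, which reduces it to
the same argument for the monotone functions `G i`.
-/

open MeasureTheory ProbabilityTheory Function

theorem IsUpperSet.exists_biInter_eq {ι α : Type*} [LinearOrder α] {s : Finset ι}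
    (hs : s.Nonempty) {U : ι → Set α} (hU : ∀ i ∈ s, IsUpperSet (U i)) :
    ∃ j ∈ s, ⋂ i ∈ s, U i = U j := by
  obtain ⟨j, hj, hmin⟩ := s.exists_minimalFor U hs
  refine ⟨j, hj, (Set.biInter_subset_of_mem hj).antisymm (Set.subset_iInter₂ fun i hi => ?_)⟩
  exact ((hU j hj).total (hU i hi)).elim id (hmin hi)

theorem Monotone.isUpperSet_support {α M : Type*} [Preorder α] [Zero M] [PartialOrder M]
    {f : α → M} (hf : Monotone f) (h0 : 0 ≤ f) : IsUpperSet (support f) :=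
  fun _ _ hxy hx => ((lt_of_le_of_ne (h0 _) (Ne.symm hx)).trans_le (hf hxy)).ne'

section Monotone

variable {Ω α ι M : Type*} [LinearOrder α] [CommMonoidWithZero M] [Nontrivial M]
  [NoZeroDivisors M] [PartialOrder M] {s : Finset ι} {f : ι → α → M}

theorem exists_support_prod_eq_of_monotone (hs : s.Nonempty) (hf : ∀ i ∈ s, Monotone (f i))
    (h0 : ∀ i ∈ s, 0 ≤ f i) : ∃ j ∈ s, (support fun x => ∏ i ∈ s, f i x) = support (f j) := by
  rw [Finset.support_prod]
  exact IsUpperSet.exists_biInter_eq hs fun i hi => (hf i hi).isUpperSet_support (h0 i hi)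

theorem measure_support_prod_comp_pos_of_monotone [MeasurableSpace Ω] {μ : Measure Ω} [NeZero μ]
    (Y : Ω → α) (hf : ∀ i ∈ s, Monotone (f i)) (h0 : ∀ i ∈ s, 0 ≤ f i)
    (hpos : ∀ i ∈ s, 0 < μ (support fun ω => f i (Y ω))) :
    0 < μ (support fun ω => ∏ i ∈ s, f i (Y ω)) := by
  rcases s.eq_empty_or_nonempty with rfl | hs
  · simp [support, NeZero.ne μ]
  · obtain ⟨j, hj, hsupp⟩ := exists_support_prod_eq_of_monotone hs hf h0
    change 0 < μ (Y ⁻¹' support fun x => ∏ i ∈ s, f i x)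
    rw [hsupp]
    exact hpos j hj

end Monotone

section Positivity

variable {Ω α ι : Type*} [MeasurableSpace Ω] [LinearOrder α] {μ : Measure Ω} [NeZero μ]
  {s : Finset ι} (Y : Ω → α)

theorem integral_prod_comp_pos_of_monotone {f : ι → α → ℝ} (hf : ∀ i ∈ s, Monotone (f i))
    (h0 : ∀ i ∈ s, 0 ≤ f i) (hint : Integrable (fun ω => ∏ i ∈ s, f i (Y ω)) μ)
    (hpos : ∀ i ∈ s, 0 < ∫ ω, f i (Y ω) ∂μ) : 0 < ∫ ω, ∏ i ∈ s, f i (Y ω) ∂μ := by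
  rw [integral_pos_iff_support_of_nonneg (fun ω => Finset.prod_nonneg fun i hi => h0 i hi _) hint]
  refine measure_support_prod_comp_pos_of_monotone Y hf h0 fun i hi => ?_
  exact (integral_pos_iff_support_of_nonneg (f := fun ω => f i (Y ω)) (fun ω => h0 i hi _)
    (Integrable.of_integral_ne_zero (hpos i hi).ne')).1 (hpos i hi)

theorem lintegral_prod_comp_pos_of_monotone [MeasurableSpace α] {f : ι → α → ENNReal}
    (hY : Measurable Y) (hfm : ∀ i ∈ s, Measurable (f i)) (hf : ∀ i ∈ s, Monotone (f i))
    (hpos : ∀ i ∈ s, 0 < ∫⁻ ω, f i (Y ω) ∂μ) : 0 < ∫⁻ ω, ∏ i ∈ s, f i (Y ω) ∂μ := by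
  have hm : ∀ i ∈ s, Measurable fun ω => f i (Y ω) := fun i hi => (hfm i hi).comp hY
  rw [lintegral_pos_iff_support (Finset.measurable_prod s hm)]
  refine measure_support_prod_comp_pos_of_monotone Y hf (fun i _ => zero_le) fun i hi => ?_
  exact (lintegral_pos_iff_support (hm i hi)).1 (hpos i hi)

end Positivity

theorem monotone_measure_le {Ω α : Type*} [MeasurableSpace Ω] [Preorder α] (μ : Measure Ω)
    (Y : Ω → α) : Monotone fun x => μ {ω | Y ω ≤ x} :=
  fun _ _ hxy => measure_mono fun _ hω => le_trans hω hxy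

theorem ProbabilityTheory.iIndepFun.measure_forall_le_eq_lintegral_prod {Ω ι : Type*}
    [MeasurableSpace Ω] {μ : Measure Ω} {X : ι → Ω → ℝ} (hindep : iIndepFun X μ)
    (hX : ∀ i, Measurable (X i)) {k : ι} {s : Finset ι} (hk : k ∉ s) :
    μ {ω | ∀ i ∈ s, X i ω ≤ X k ω} = ∫⁻ ω, ∏ i ∈ s, μ {ω' | X i ω' ≤ X k ω} ∂μ := by
  have := hindep.isProbabilityMeasure
  set Y : Ω → (s → ℝ) := fun ω i => X i ω
  have hY : Measurable Y := measurable_pi_lambda _ fun i => hX i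
  have hXY : IndepFun (X k) Y μ :=
    (hindep.indepFun_finset {k} s (Finset.disjoint_singleton_left.2 hk) hX).comp
      (measurable_pi_apply (⟨k, Finset.mem_singleton_self k⟩ : ({k} : Finset ι))) measurable_id
  set A : Set (ℝ × (s → ℝ)) := {p | ∀ i, p.2 i ≤ p.1}
  have hA : MeasurableSet A := by
    simp only [A, Set.ofPred_forall]
    exact MeasurableSet.iInter fun i => measurableSet_le (by fun_prop) (by fun_prop)
  have hslice (x : ℝ) : μ.map Y (Prod.mk x ⁻¹' A) = ∏ i ∈ s, μ {ω | X i ω ≤ x} := by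
    rw [Measure.map_apply hY (hA.preimage measurable_prodMk_left)]
    have hpre : Y ⁻¹' (Prod.mk x ⁻¹' A) = ⋂ i ∈ s, X i ⁻¹' Set.Iic x := by
      ext ω
      simp [A, Y]
    rw [hpre, hindep.measure_inter_preimage_eq_mul s fun i _ => measurableSet_Iic]
    rfl
  have hmeas : Measurable fun x => ∏ i ∈ s, μ {ω | X i ω ≤ x} :=
    Finset.measurable_prod s fun i _ => (monotone_measure_le μ (X i)).measurable
  calc μ {ω | ∀ i ∈ s, X i ω ≤ X k ω}
      = μ.map (fun ω => (X k ω, Y ω)) A := by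
        rw [Measure.map_apply ((hX k).prodMk hY) hA]
        simp [A, Y]
    _ = ∫⁻ x, μ.map Y (Prod.mk x ⁻¹' A) ∂μ.map (X k) := by
        rw [hXY.map_prod_eq_prod_map_map (hX k).aemeasurable hY.aemeasurable, Measure.prod_apply hA]
    _ = ∫⁻ ω, ∏ i ∈ s, μ {ω' | X i ω' ≤ X k ω} ∂μ := by
        simp_rw [hslice]
        exact lintegral_map hmeas (hX k)

theorem ProbabilityTheory.iIndepFun.measure_le_eq_lintegral {Ω ι : Type*} [MeasurableSpace Ω]
    {μ : Measure Ω} {X : ι → Ω → ℝ} (hindep : iIndepFun X μ) (hX : ∀ i, Measurable (X i))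
    {i k : ι} (hik : i ≠ k) :
    μ {ω | X i ω ≤ X k ω} = ∫⁻ ω, μ {ω' | X i ω' ≤ X k ω} ∂μ := by
  simpa using hindep.measure_forall_le_eq_lintegral_prod hX (Finset.notMem_singleton.2 hik.symm)

theorem ProbabilityTheory.iIndepFun.measure_forall_le_pos {Ω ι : Type*} [MeasurableSpace Ω]
    {μ : Measure Ω} {X : ι → Ω → ℝ} (hindep : iIndepFun X μ) (hX : ∀ i, Measurable (X i))
    {k : ι} {s : Finset ι} (hk : k ∉ s) (hpos : ∀ i ∈ s, 0 < μ {ω | X i ω ≤ X k ω}) :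
    0 < μ {ω | ∀ i ∈ s, X i ω ≤ X k ω} := by
  have := hindep.isProbabilityMeasure
  rw [hindep.measure_forall_le_eq_lintegral_prod hX hk]
  refine lintegral_prod_comp_pos_of_monotone (X k) (hX k)
    (fun i _ => (monotone_measure_le μ (X i)).measurable) (fun i _ => monotone_measure_le μ (X i))
    fun i hi => ?_
  rw [← hindep.measure_le_eq_lintegral hX (ne_of_mem_of_not_mem hi hk)]
  exact hpos i hi

theorem cdf_map_eq_toReal {Ω : Type*} [MeasurableSpace Ω] {μ : Measure Ω} [IsProbabilityMeasure μ]
    {Y : Ω → ℝ} (hY : Measurable Y) (x : ℝ) : cdf (μ.map Y) x = (μ {ω | Y ω ≤ x}).toReal := by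
  have := Measure.isProbabilityMeasure_map (μ := μ) hY.aemeasurable
  rw [cdf_eq_real, measureReal_def, Measure.map_apply hY measurableSet_Iic]
  rfl

theorem integral_prod_cdf_comp_pos {Ω ι : Type*} [MeasurableSpace Ω] {μ : Measure Ω}
    [IsProbabilityMeasure μ] {Y : Ω → ℝ} (hY : Measurable Y) {s : Finset ι}
    (ρ : ι → Measure ℝ) (hpos : ∀ i ∈ s, 0 < ∫ ω, cdf (ρ i) (Y ω) ∂μ) :
    0 < ∫ ω, ∏ i ∈ s, cdf (ρ i) (Y ω) ∂μ := by
  have hint : Integrable (fun ω => ∏ i ∈ s, cdf (ρ i) (Y ω)) μ := by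
    refine .of_bound (Finset.measurable_prod s fun i _ =>
      (monotone_cdf _).measurable.comp hY).aestronglyMeasurable 1 (ae_of_all _ fun ω => ?_)
    rw [Real.norm_of_nonneg (Finset.prod_nonneg fun i _ => cdf_nonneg _ _)]
    exact Finset.prod_le_one (fun i _ => cdf_nonneg _ _) fun i _ => cdf_le_one _ _
  exact integral_prod_comp_pos_of_monotone Y (fun i _ => monotone_cdf _)
    (fun i _ => cdf_nonneg _) hint hpos

theorem product_of_cdfs_positive_general
    {Ωs : Type*} [MeasurableSpace Ωs] (μ : Measure Ωs) [IsProbabilityMeasure μ]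
    {n : ℕ} [NeZero n]
    (X : Fin n → Ωs → ℝ)
    (hmeas : ∀ i, Measurable (X i))
    (hindep : iIndepFun X μ)
    (F : Fin n → ℝ → ℝ) (hF : ∀ i x, F i x = (μ {ω | X i ω ≤ x}).toReal) :
    ((∀ i : Fin n, i ≠ 0 → 0 < ∫ ω, F i (X 0 ω) ∂μ) →
      0 < ∫ ω, ∏ i ∈ Finset.univ.filter (fun i : Fin n => i ≠ 0), F i (X 0 ω) ∂μ)
    ∧ ((∀ i : Fin n, i ≠ 0 → 0 < μ {ω | X i ω ≤ X 0 ω}) →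
      0 < μ {ω | ∀ i, i ≠ 0 → X i ω ≤ X 0 ω}) := by
  obtain rfl : F = fun i x => cdf (μ.map (X i)) x :=
    funext₂ fun i x => (hF i x).trans (cdf_map_eq_toReal (hmeas i) x).symm
  set s := Finset.univ.filter (fun i : Fin n => i ≠ 0)
  have hs : ∀ {i}, i ∈ s → i ≠ 0 := fun hi => (Finset.mem_filter.1 hi).2
  refine ⟨fun hpos => integral_prod_cdf_comp_pos (hmeas 0) _ fun i hi => hpos i (hs hi),
    fun hpos => ?_⟩
  have hevent : {ω | ∀ i, i ≠ 0 → X i ω ≤ X 0 ω} = {ω | ∀ i ∈ s, X i ω ≤ X 0 ω} := by simp [s]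
  rw [hevent]
  exact hindep.measure_forall_le_pos hmeas (by simp [s]) fun i hi => hpos i (hs hi)

theorem product_of_cdfs_positive
    {Ωs : Type*} [MeasurableSpace Ωs] (μ : Measure Ωs) [IsProbabilityMeasure μ]
    {n : ℕ} [NeZero n]
    (X : Fin n → Ωs → ℝ)
    (hmeas : ∀ i, Measurable (X i))
    (hindep : iIndepFun X μ)
    (a b : ℝ) (hbdd : ∀ i ω, X i ω ∈ Set.Icc a b)
    (F : Fin n → ℝ → ℝ) (hF : ∀ i x, F i x = (μ {ω | X i ω ≤ x}).toReal) :
    ((∀ i : Fin n, i ≠ 0 → 0 < ∫ ω, F i (X 0 ω) ∂μ) →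
      0 < ∫ ω, ∏ i ∈ Finset.univ.filter (fun i : Fin n => i ≠ 0), F i (X 0 ω) ∂μ)
    ∧ ((∀ i : Fin n, i ≠ 0 → 0 < μ {ω | X i ω ≤ X 0 ω}) →
      0 < μ {ω | ∀ i, i ≠ 0 → X i ω ≤ X 0 ω}) :=
  product_of_cdfs_positive_general μ X hmeas hindep F hF
end
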